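/- Let f : {-1,1}^n → {-1,1} and suppose disc(f ∘ XOR) < δ. Then the threshold weight with integer coefficients of f satisfies W(f, n−1) > 1/(4δ), i.e., every integer-coefficient polynomial sign-representing f has total weight greater than 1/(4δ). -/
import Mathlib


open scoped BigOperators

noncomputable section

/-- sign value of a bit: `true` ↦ -1, `false` ↦ 1 (±1 encoding of the cube). -/
def sgnv (b : Bool) : ℝ := if b then -1 else 1

/-- the Fourier character χ_S on the cube. -/
def chi {ι : Type*} (S : Finset ι) (x : ι → Bool) : ℝ := ∏ i ∈ S, sgnv (x i)

/-- evaluation of the multilinear polynomial with coefficients `c`. -/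
def pEval {ι : Type*} [Fintype ι] [DecidableEq ι] (c : Finset ι → ℝ) (x : ι → Bool) : ℝ :=
  ∑ S : Finset ι, c S * chi S x

/-- weight of a polynomial: sum of absolute values of its coefficients. -/
def wt {ι : Type*} [Fintype ι] [DecidableEq ι] (c : Finset ι → ℝ) : ℝ :=
  ∑ S : Finset ι, |c S|

/-- `c` sign represents `f`. -/
def SignRep {ι : Type*} [Fintype ι] [DecidableEq ι] (c : Finset ι → ℝ)
    (f : (ι → Bool) → ℝ) : Prop := ∀ x, 0 < pEval c x * f x

/-- `λ` is a probability distribution on the finite type `α`. -/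
def IsDistrib {α : Type*} [Fintype α] (lam : α → ℝ) : Prop :=
  (∀ a, 0 ≤ lam a) ∧ ∑ a, lam a = 1

/-- the discrepancy of `F` under the distribution `lam`. -/
def discUnder {α β : Type*} [Fintype α] [Fintype β] (lam : α × β → ℝ)
    (F : α → β → ℝ) : ℝ :=
  sSup {r : ℝ | ∃ S : Finset α, ∃ T : Finset β,
    r = |∑ x ∈ S, ∑ y ∈ T, F x y * lam (x, y)|}

/-- the discrepancy of `F`: the minimum over distributions of `discUnder`. -/
def disc {α β : Type*} [Fintype α] [Fintype β] (F : α → β → ℝ) : ℝ :=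
  sInf {d : ℝ | ∃ lam : α × β → ℝ, IsDistrib lam ∧ discUnder lam F = d}

/-- `f ∘ XOR` as a two-party function. -/
def fXOR2 {n : ℕ} (f : (Fin n → Bool) → ℝ) : (Fin n → Bool) → (Fin n → Bool) → ℝ :=
  fun x y => f (fun i => xor (x i) (y i))

lemma chi_pm {ι : Type*} (S : Finset ι) (x : ι → Bool) : chi S x = 1 ∨ chi S x = -1 := by
  refine Finset.prod_induction _ (fun r => r = 1 ∨ r = -1) ?_ (Or.inl rfl) ?_
  · rintro a b (rfl|rfl) (rfl|rfl) <;> norm_num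
  · intro i _; unfold sgnv; by_cases h : x i <;> simp [h]

lemma chi_xor {ι : Type*} (S : Finset ι) (x y : ι → Bool) :
    chi S (fun i => xor (x i) (y i)) = chi S x * chi S y := by
  unfold chi
  rw [← Finset.prod_mul_distrib]
  refine Finset.prod_congr rfl fun i _ => ?_
  cases hx : x i <;> cases hy : y i <;> simp [sgnv, hx, hy]

lemma split_pm {γ : Type*} [Fintype γ] (ε g : γ → ℝ) (hε : ∀ x, ε x = 1 ∨ ε x = -1) :
    ∑ x, g x * ε x =
      ∑ x ∈ Finset.univ.filter (fun x => ε x = 1), g x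
      - ∑ x ∈ Finset.univ.filter (fun x => ¬ (ε x = 1)), g x := by
  classical
  have h := Finset.sum_filter_add_sum_filter_not Finset.univ (fun x => ε x = 1)
      (fun x => g x * ε x)
  have h1 : ∑ x ∈ Finset.univ.filter (fun x => ε x = 1), g x * ε x
      = ∑ x ∈ Finset.univ.filter (fun x => ε x = 1), g x := by
    refine Finset.sum_congr rfl fun x hx => ?_
    rw [(Finset.mem_filter.mp hx).2, mul_one]
  have h2 : ∑ x ∈ Finset.univ.filter (fun x => ¬ (ε x = 1)), g x * ε x
      = - ∑ x ∈ Finset.univ.filter (fun x => ¬ (ε x = 1)), g x := by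
    rw [← Finset.sum_neg_distrib]
    refine Finset.sum_congr rfl fun x hx => ?_
    rcases hε x with h' | h'
    · exact absurd h' (Finset.mem_filter.mp hx).2
    · rw [h']; ring
  linarith [h]

lemma rect_le_discUnder {α β : Type*} [Fintype α] [Fintype β] (lam : α × β → ℝ)
    (F : α → β → ℝ) (S : Finset α) (T : Finset β) :
    |∑ x ∈ S, ∑ y ∈ T, F x y * lam (x, y)| ≤ discUnder lam F := by
  apply le_csSup
  · refine BddAbove.mono ?_ (Set.finite_range
      (fun p : Finset α × Finset β => |∑ x ∈ p.1, ∑ y ∈ p.2, F x y * lam (x, y)|)).bddAbove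
    rintro r ⟨S', T', rfl⟩
    exact ⟨(S', T'), rfl⟩
  · exact ⟨S, T, rfl⟩

/-- if `disc(f ∘ XOR) < δ` then every integer-coefficient polynomial of
degree at most `n−1` that sign represents `f` has total weight greater than
`1/(4δ)`, i.e. `W(f, n−1) > 1/(4δ)`. -/
theorem integer_threshold_weight_lower (n : ℕ) (f : (Fin n → Bool) → ℝ)
    (hf : ∀ x, f x = 1 ∨ f x = -1) (δ : ℝ) (hδ : 0 < δ)
    (hdisc : disc (fXOR2 f) < δ) :
    ∀ c : Finset (Fin n) → ℝ, (∀ S, ∃ z : ℤ, c S = (z : ℝ)) →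
      (∀ S, c S ≠ 0 → S.card ≤ n - 1) → SignRep c f →
      1 / (4 * δ) < wt c := by
  classical
  intro c hint _hdeg hsign
  choose g hg using hint
  -- margin at least 1
  have hmargin : ∀ z : Fin n → Bool, 1 ≤ pEval c z * f z := by
    intro z
    have hterm : ∀ S : Finset (Fin n), ∃ m : ℤ, c S * chi S z = (m : ℝ) := by
      intro S
      rcases chi_pm S z with h | h
      · exact ⟨g S, by rw [h, hg, mul_one]⟩
      · exact ⟨-(g S), by rw [h, hg]; push_cast; ring⟩
    choose m hm using hterm
    have hp : pEval c z = ((∑ S, m S : ℤ) : ℝ) := by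
      rw [pEval]; push_cast; exact Finset.sum_congr rfl fun S _ => hm S
    obtain ⟨k, hk⟩ : ∃ k : ℤ, pEval c z * f z = (k : ℝ) := by
      rcases hf z with h | h
      · exact ⟨∑ S, m S, by rw [h, mul_one, hp]⟩
      · exact ⟨-(∑ S, m S), by rw [h, hp]; push_cast; ring⟩
    have hpos := hsign z
    rw [hk] at hpos ⊢
    have hk0 : (0:ℤ) < k := by exact_mod_cast hpos
    have hk1 : (1:ℤ) ≤ k := hk0
    exact_mod_cast hk1
  set W := wt c with hWdef
  -- positivity of the weight
  have hWpos : 0 < W := by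
    set z : Fin n → Bool := fun _ => false
    have hx := hmargin z
    have hub : |pEval c z| ≤ W := by
      rw [hWdef, wt, pEval]
      refine (Finset.abs_sum_le_sum_abs _ _).trans ?_
      refine Finset.sum_le_sum fun S _ => ?_
      rw [abs_mul]
      rcases chi_pm S z with h | h <;> rw [h] <;> simp
    have h1 : (1:ℝ) ≤ |pEval c z| := by
      calc (1:ℝ) ≤ pEval c z * f z := hx
        _ ≤ |pEval c z * f z| := le_abs_self _
        _ = |pEval c z| * |f z| := abs_mul _ _
        _ = |pEval c z| := by rcases hf z with h | h <;> rw [h] <;> simp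
    linarith
  -- key inequality for every distribution
  have hkey : ∀ lam : (Fin n → Bool) × (Fin n → Bool) → ℝ, IsDistrib lam →
      1 ≤ W * (4 * discUnder lam (fXOR2 f)) := by
    intro lam hlam
    set D := discUnder lam (fXOR2 f) with hDdef
    set T : Finset (Fin n) → ℝ := fun S =>
      ∑ p : (Fin n → Bool) × (Fin n → Bool),
        (fXOR2 f p.1 p.2 * lam p) * (chi S p.1 * chi S p.2) with hTdef
    have step1 : 1 ≤ ∑ S : Finset (Fin n), c S * T S := by
      have e2 : (1:ℝ) ≤ ∑ p : (Fin n → Bool) × (Fin n → Bool),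
          lam p * (pEval c (fun i => xor (p.1 i) (p.2 i)) * f (fun i => xor (p.1 i) (p.2 i))) := by
        rw [show (1:ℝ) = ∑ p : (Fin n → Bool) × (Fin n → Bool), lam p from hlam.2.symm]
        refine Finset.sum_le_sum fun p _ => ?_
        have hm := hmargin (fun i => xor (p.1 i) (p.2 i))
        nlinarith [hlam.1 p]
      have e3 : ∑ p : (Fin n → Bool) × (Fin n → Bool),
          lam p * (pEval c (fun i => xor (p.1 i) (p.2 i)) * f (fun i => xor (p.1 i) (p.2 i)))
          = ∑ S : Finset (Fin n), c S * T S := by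
        have e4 : ∀ p : (Fin n → Bool) × (Fin n → Bool),
            lam p * (pEval c (fun i => xor (p.1 i) (p.2 i)) * f (fun i => xor (p.1 i) (p.2 i)))
            = ∑ S : Finset (Fin n),
                c S * ((fXOR2 f p.1 p.2 * lam p) * (chi S p.1 * chi S p.2)) := by
          intro p
          rw [pEval, Finset.sum_mul, Finset.mul_sum]
          refine Finset.sum_congr rfl fun S _ => ?_
          rw [chi_xor]
          show lam p * (c S * (chi S p.1 * chi S p.2) * f (fun i => xor (p.1 i) (p.2 i)))
            = c S * ((f (fun i => xor (p.1 i) (p.2 i)) * lam p) * (chi S p.1 * chi S p.2))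
          ring
        rw [Finset.sum_congr rfl fun p _ => e4 p, Finset.sum_comm]
        refine Finset.sum_congr rfl fun S _ => ?_
        rw [hTdef, Finset.mul_sum]
      linarith [e2, e3.symm.le, e3.le]
    have hTbound : ∀ S : Finset (Fin n), |T S| ≤ 4 * D := by
      intro S
      set A := Finset.univ.filter (fun x : Fin n → Bool => chi S x = 1) with hA
      set A' := Finset.univ.filter (fun x : Fin n → Bool => ¬ (chi S x = 1)) with hA'
      have hsplit : T S =
          (∑ x ∈ A, ∑ y ∈ A, fXOR2 f x y * lam (x, y))
          - (∑ x ∈ A, ∑ y ∈ A', fXOR2 f x y * lam (x, y))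
          - ((∑ x ∈ A', ∑ y ∈ A, fXOR2 f x y * lam (x, y))
             - (∑ x ∈ A', ∑ y ∈ A', fXOR2 f x y * lam (x, y))) := by
        have hprod : T S = ∑ x : Fin n → Bool, ∑ y : Fin n → Bool,
            (fXOR2 f x y * lam (x, y)) * (chi S x * chi S y) := by
          rw [hTdef]; exact Fintype.sum_prod_type _
        have hinner : ∀ x : Fin n → Bool,
            ∑ y : Fin n → Bool, (fXOR2 f x y * lam (x, y)) * (chi S x * chi S y)
            = (∑ y ∈ A, fXOR2 f x y * lam (x, y) - ∑ y ∈ A', fXOR2 f x y * lam (x, y))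
              * chi S x := by
          intro x
          have := split_pm (chi S) (fun y => fXOR2 f x y * lam (x, y)) (chi_pm S)
          rw [← this, Finset.sum_mul]
          exact Finset.sum_congr rfl fun y _ => by ring
        rw [hprod, Finset.sum_congr rfl fun x _ => hinner x,
          split_pm (chi S)
            (fun x => ∑ y ∈ A, fXOR2 f x y * lam (x, y) - ∑ y ∈ A', fXOR2 f x y * lam (x, y))
            (chi_pm S), Finset.sum_sub_distrib, Finset.sum_sub_distrib]
      have b11 := rect_le_discUnder lam (fXOR2 f) A A
      have b12 := rect_le_discUnder lam (fXOR2 f) A A'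
      have b21 := rect_le_discUnder lam (fXOR2 f) A' A
      have b22 := rect_le_discUnder lam (fXOR2 f) A' A'
      rw [← hDdef] at b11 b12 b21 b22
      obtain ⟨l11, u11⟩ := abs_le.mp b11
      obtain ⟨l12, u12⟩ := abs_le.mp b12
      obtain ⟨l21, u21⟩ := abs_le.mp b21
      obtain ⟨l22, u22⟩ := abs_le.mp b22
      rw [hsplit, abs_le]
      constructor <;> linarith
    have step2 : ∑ S : Finset (Fin n), c S * T S ≤ W * (4 * D) := by
      calc ∑ S : Finset (Fin n), c S * T S ≤ ∑ S : Finset (Fin n), |c S| * (4 * D) := by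
            refine Finset.sum_le_sum fun S _ => ?_
            calc c S * T S ≤ |c S * T S| := le_abs_self _
              _ = |c S| * |T S| := abs_mul _ _
              _ ≤ |c S| * (4 * D) := mul_le_mul_of_nonneg_left (hTbound S) (abs_nonneg _)
        _ = W * (4 * D) := by rw [hWdef, wt, Finset.sum_mul]
    linarith
  -- pass to the infimum
  have hne : Set.Nonempty {d : ℝ | ∃ lam : (Fin n → Bool) × (Fin n → Bool) → ℝ,
      IsDistrib lam ∧ discUnder lam (fXOR2 f) = d} := by
    refine ⟨_, ⟨fun _ => (Fintype.card ((Fin n → Bool) × (Fin n → Bool)) : ℝ)⁻¹, ⟨?_, ?_⟩, rfl⟩⟩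
    · intro a; positivity
    · rw [Finset.sum_const, Finset.card_univ, nsmul_eq_mul, mul_inv_cancel₀]
      exact_mod_cast Fintype.card_ne_zero
  have hlow : 1 / (4 * W) ≤ disc (fXOR2 f) := by
    refine le_csInf hne ?_
    rintro d ⟨lam, hlam, rfl⟩
    have hk := hkey lam hlam
    rw [div_le_iff₀ (by positivity)]
    nlinarith
  have h1 : 1 / (4 * W) < δ := lt_of_le_of_lt hlow hdisc
  rw [div_lt_iff₀ (by positivity)] at h1
  rw [div_lt_iff₀ (by positivity)]
  nlinarith


end
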